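/- arXiv:1801.01790 — 2 statements merged into one kernel-verified Lean document; each statement's English description precedes it below -/
import Mathlib

section
/- Let 𝒜 be a central arrangement and X ∈ L_k(𝒜). Then the Euler restriction map ρ : D(𝒜) → D(𝒜^X) is generically surjective: at a generic point x ∈ X, the localized map D(𝒜)_x → D(𝒜^X)_x is surjective. In particular, if θ_E, θ₁, …, θ_s generate D(𝒜), then among the restrictions of θ₁,…,θ_s to X there are ℓ−k−1 elements that are independent over S^X = Sym(X*). -/
open MvPolynomial Module

attribute [local instance] Classical.propDecidable

namespace ArrPaper

variable {K : Type*} [Field K] {ℓ m : ℕ}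

/-- The polynomial coordinate ring `S = K[x₁,…,x_ℓ]`. -/
abbrev S (K : Type*) [Field K] (ℓ : ℕ) := MvPolynomial (Fin ℓ) K

/-- A polynomial derivation of `S`, given by its values on the variables. -/
abbrev Deriv (K : Type*) [Field K] (ℓ : ℕ) := Fin ℓ → S K ℓ

/-- The linear form `∑ αᵢ xᵢ` as a polynomial. -/
noncomputable def lin (α : Fin ℓ → K) : S K ℓ := ∑ i, C (α i) * X i

/-- The value `θ(α)` of a derivation on a linear form `α`. -/
noncomputable def applyD (θ : Deriv K ℓ) (α : Fin ℓ → K) : S K ℓ := ∑ i, C (α i) * θ i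

lemma applyD_add (θ η : Deriv K ℓ) (α : Fin ℓ → K) :
    applyD (θ + η) α = applyD θ α + applyD η α := by
  simp [applyD, mul_add, Finset.sum_add_distrib]

lemma applyD_smul (f : S K ℓ) (θ : Deriv K ℓ) (α : Fin ℓ → K) :
    applyD (f • θ) α = f * applyD θ α := by
  simp only [applyD, Pi.smul_apply, smul_eq_mul, Finset.mul_sum]
  exact Finset.sum_congr rfl fun i _ => by ring

/-- The logarithmic derivation module `D(𝒜)` of an arrangement, where the
arrangement is specified by the finite set of its defining linear forms. -/
noncomputable def logDer (A : Finset (Fin ℓ → K)) : Submodule (S K ℓ) (Deriv K ℓ) where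
  carrier := {θ | ∀ α ∈ A, lin α ∣ applyD θ α}
  add_mem' := by
    intro a b ha hb α hα
    rw [applyD_add]
    exact dvd_add (ha α hα) (hb α hα)
  zero_mem' := by intro α hα; simp [applyD]
  smul_mem' := by
    intro f θ hθ β hβ
    rw [applyD_smul]
    exact (hθ β hβ).mul_left f

/-- The logarithmic derivation module `D(𝒜, m)` of a multiarrangement. -/
noncomputable def logDerM (A : Finset (Fin ℓ → K)) (mult : (Fin ℓ → K) → ℕ) :
    Submodule (S K ℓ) (Deriv K ℓ) where
  carrier := {θ | ∀ α ∈ A, (lin α) ^ (mult α) ∣ applyD θ α}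
  add_mem' := by
    intro a b ha hb α hα
    rw [applyD_add]
    exact dvd_add (ha α hα) (hb α hα)
  zero_mem' := by intro α hα; simp [applyD]
  smul_mem' := by
    intro f θ hθ β hβ
    rw [applyD_smul]
    exact (hθ β hβ).mul_left f

/-- The Euler derivation. -/
noncomputable def eulerD (K : Type*) [Field K] (ℓ : ℕ) : Deriv K ℓ := fun i => X i

/-- A derivation is homogeneous of degree `d` if all its coefficients are. -/
def IsHomog (θ : Deriv K ℓ) (d : ℕ) : Prop := ∀ i, (θ i).IsHomogeneous d

/-- A family is a (free) basis of a submodule of the derivation module. -/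
def IsBasisOf {ι : Type*} (θ : ι → Deriv K ℓ) (M : Submodule (S K ℓ) (Deriv K ℓ)) : Prop :=
  (∀ i, θ i ∈ M) ∧ LinearIndependent (S K ℓ) θ ∧ Submodule.span (S K ℓ) (Set.range θ) = M

/-- `𝒜` is free with exponents `d₁,…,d_ℓ`. -/
def IsFreeWithExp (A : Finset (Fin ℓ → K)) (d : Fin ℓ → ℕ) : Prop :=
  ∃ θ : Fin ℓ → Deriv K ℓ, IsBasisOf θ (logDer A) ∧ ∀ i, IsHomog (θ i) (d i)

/-- `(𝒜, m)` is free with exponents `d₁,…,d_ℓ`. -/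
def IsFreeWithExpM (A : Finset (Fin ℓ → K)) (mult : (Fin ℓ → K) → ℕ) (d : Fin ℓ → ℕ) : Prop :=
  ∃ θ : Fin ℓ → Deriv K ℓ, IsBasisOf θ (logDerM A mult) ∧ ∀ i, IsHomog (θ i) (d i)

/-- The hyperplane `ker α ⊆ Kˡ` attached to a linear form `α`. -/
noncomputable def hyp (α : Fin ℓ → K) : Submodule K (Fin ℓ → K) :=
  LinearMap.ker (∑ i, α i • LinearMap.proj i : (Fin ℓ → K) →ₗ[K] K)

/-- The restriction `𝒜^H = {H ∩ L : L ∈ 𝒜'}` of an arrangement `𝒜'` to the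
hyperplane `H = ker α_H`, as a finite set of subspaces. -/
noncomputable def restH (A' : Finset (Fin ℓ → K)) (αH : Fin ℓ → K) :
    Finset (Submodule K (Fin ℓ → K)) :=
  A'.image (fun β => hyp αH ⊓ hyp β)

/-- The restriction `𝒜^X = {X ∩ H : H ∈ 𝒜, X ⊄ H}` to a subspace `X`. -/
noncomputable def restArr (A : Finset (Fin ℓ → K)) (Xs : Submodule K (Fin ℓ → K)) :
    Finset (Submodule K (Fin ℓ → K)) :=
  (A.filter (fun β => ¬ Xs ≤ hyp β)).image (fun β => Xs ⊓ hyp β)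

/-- Codimension of a subspace of `Kˡ`. -/
noncomputable def codim (Xs : Submodule K (Fin ℓ → K)) : ℕ := ℓ - Module.finrank K Xs

/-- The intersection lattice `L(𝒜)`. -/
noncomputable def LSet (A : Finset (Fin ℓ → K)) : Finset (Submodule K (Fin ℓ → K)) :=
  A.powerset.image (fun b => b.inf hyp)

/-- Pullback (restriction) of polynomial functions along a linear map
`ι : Kᵐ → Kˡ`. -/
noncomputable def pullback (ι : (Fin m → K) →ₗ[K] (Fin ℓ → K)) : S K ℓ →ₐ[K] S K m :=
  aeval (fun j => ∑ i, C (ι (Pi.single i 1) j) * X i)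

/-- The (Euler) restriction of a derivation onto the subspace `im ι ≅ Kᵐ`,
computed using chosen linear forms `γ i` lifting the coordinates of `Kᵐ`. -/
noncomputable def restD (ι : (Fin m → K) →ₗ[K] (Fin ℓ → K)) (γ : Fin m → (Fin ℓ → K))
    (θ : Deriv K ℓ) : Deriv K m :=
  fun i => pullback ι (applyD θ (γ i))

/-- `γ` is a system of coordinate lifts for `ι : Kᵐ → Kˡ`. -/
def CoordLifts (ι : (Fin m → K) →ₗ[K] (Fin ℓ → K)) (γ : Fin m → (Fin ℓ → K)) : Prop :=
  ∀ i, pullback ι (lin (γ i)) = X i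

/-- `B` (a finite set of forms on `Kᵐ`) represents the restricted arrangement
`𝒜^X` via the embedding `ι : Kᵐ ≅ X ⊆ Kˡ`. -/
def Represents (B : Finset (Fin m → K)) (ι : (Fin m → K) →ₗ[K] (Fin ℓ → K))
    (A : Finset (Fin ℓ → K)) (Xs : Submodule K (Fin ℓ → K)) : Prop :=
  (∀ b ∈ B, b ≠ 0) ∧ B.image (fun b => (hyp b).map ι) = restArr A Xs ∧
    B.card = (restArr A Xs).card

/-- The restricted arrangement `𝒜^X` is free with exponents `e`. -/
def RestFree (A : Finset (Fin ℓ → K)) (Xs : Submodule K (Fin ℓ → K)) (m : ℕ)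
    (e : Fin m → ℕ) : Prop :=
  ∃ (φ : (Fin m → K) ≃ₗ[K] Xs) (B : Finset (Fin m → K)),
    Represents B (Xs.subtype ∘ₗ φ.toLinearMap) A Xs ∧ IsFreeWithExp B e

/-- The Ziegler multiplicity of a hyperplane `ker b ⊆ Kᵐ ≅ H` obtained by
restricting `𝒜` onto `H = ker α_H`. -/
noncomputable def zMult (A : Finset (Fin ℓ → K)) (αH : Fin ℓ → K)
    (ι : (Fin m → K) →ₗ[K] (Fin ℓ → K)) (b : Fin m → K) : ℕ :=
  ((A.erase αH).filter (fun β => hyp αH ⊓ hyp β = (hyp b).map ι)).card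

/-- `θ ↦ θ(α)` as an `S`-linear map. -/
noncomputable def applyDL (α : Fin ℓ → K) : Deriv K ℓ →ₗ[S K ℓ] S K ℓ where
  toFun θ := applyD θ α
  map_add' a b := applyD_add a b α
  map_smul' f θ := by simpa using applyD_smul f θ α

/-- `D_H(𝒜) = {θ ∈ D(𝒜) : θ(α_H) = 0}`. -/
noncomputable def DH (A : Finset (Fin ℓ → K)) (αH : Fin ℓ → K) :
    Submodule (S K ℓ) (Deriv K ℓ) :=
  logDer A ⊓ LinearMap.ker (applyDL αH)

end ArrPaper

/-!
Let `Q` be the product of the forms of the hyperplanes of `𝒜` not containing `X`; a point of `X`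
is generic exactly when `Q` does not vanish there. Given a vector field `η` on `X`, lift the
coefficients of `Q|_X • η` to `Kˡ` along a linear section of the restriction and push the result
forward along `X ⊆ Kˡ`: the derivation obtained is tangent to every hyperplane containing `X`, and
its coefficients are divisible by `Q`, so it lies in `D(𝒜)`; its Euler restriction is `Q|_X • η`.
Hence `ρ` becomes surjective once `Q|_X` is inverted. For generators `θ_E, θ₁, …, θ_s` of `D(𝒜)`,
the restriction of `θ_E` is the Euler derivation of `X`, so over the fraction field of `S^X` the
restrictions of the `θᵢ` span a subspace of codimension at most one in the vector fields on `X`;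
`ℓ - k - 1` of them are independent there, hence over `S^X`.
-/

open Submodule in
theorem Module.finrank_le_finrank_span_add_one {F V : Type*} [Field F] [AddCommGroup V]
    [Module F V] [FiniteDimensional F V] {e : V} {s : Set V} (h : span F (insert e s) = ⊤) :
    finrank F V ≤ finrank F (span F s) + 1 := by
  have := finrank_add_le_finrank_add_finrank (span F {e}) (span F s)
  rw [← span_insert, h, finrank_top] at this
  have : finrank F (span F {e}) ≤ 1 := (finrank_span_le_card {e}).trans (by simp)
  omega

theorem exists_finset_linearIndepOn_card_eq {F V ι : Type*} [Field F] [AddCommGroup V]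
    [Module F V] [Finite ι] (u : ι → V) {n : ℕ}
    (hn : n ≤ finrank F (Submodule.span F (Set.range u))) :
    ∃ t : Finset ι, t.card = n ∧ LinearIndepOn F u t := by
  obtain ⟨b, -, -, hspan, hli⟩ :=
    exists_linearIndepOn_extension (linearIndepOn_empty F u) (Set.empty_subset Set.univ)
  have hb : Submodule.span F (Set.range u) = Submodule.span F (u '' b) := by
    refine le_antisymm ?_ (Submodule.span_mono (Set.image_subset_range u b))
    rw [Submodule.span_le, ← Set.image_univ]; exact hspan
  have : Fintype b := b.toFinite.fintype
  have hcard : finrank F (Submodule.span F (Set.range u)) = b.toFinset.card := by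
    rw [hb, Set.image_eq_range, finrank_span_eq_card hli, Set.toFinset_card]
  obtain ⟨t, htb, rfl⟩ := Finset.exists_subset_card_eq (hn.trans hcard.le)
  exact ⟨t, rfl, hli.mono (by simpa [Set.subset_def] using htb)⟩

theorem exists_finset_linearIndepOn_of_smul_single_mem_span {R ι : Type*} [CommRing R]
    [IsDomain R] [Finite ι] {m : ℕ} (e : Fin m → R) (u : ι → Fin m → R) {Q : R} (hQ : Q ≠ 0)
    (h : ∀ j, Q • Pi.single j 1 ∈ Submodule.span R (insert e (Set.range u))) :
    ∃ t : Finset ι, t.card = m - 1 ∧ LinearIndepOn R u t := by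
  let F := FractionRing R
  let ψ : (Fin m → R) →ₗ[R] (Fin m → F) := (Algebra.linearMap R F).compLeft (Fin m)
  have hQF : algebraMap R F Q ≠ 0 := (map_ne_zero_iff _ (IsFractionRing.injective R F)).mpr hQ
  have hspan : Submodule.span F (insert (ψ e) (Set.range (ψ ∘ u))) = ⊤ := by
    rw [eq_top_iff, ← (Pi.basisFun F (Fin m)).span_eq, Submodule.span_le]
    rintro _ ⟨j, rfl⟩
    have hj := Submodule.mem_map_of_mem (f := ψ) (h j)
    rw [Submodule.map_span, Set.image_insert_eq, ← Set.range_comp] at hj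
    have hj' := Submodule.span_le_restrictScalars R F _ hj
    have hψQ : ψ (Q • Pi.single j 1) = algebraMap R F Q • Pi.basisFun F (Fin m) j := by
      ext i; by_cases hij : i = j <;> simp [ψ, hij]
    rw [hψQ, Submodule.restrictScalars_mem] at hj'
    have hj'' := Submodule.smul_mem _ (algebraMap R F Q)⁻¹ hj'
    rwa [smul_smul, inv_mul_cancel₀ hQF, one_smul] at hj''
  have hrank := Module.finrank_le_finrank_span_add_one hspan
  rw [Module.finrank_fin_fun] at hrank
  obtain ⟨t, hcard, hli⟩ := exists_finset_linearIndepOn_card_eq (F := F) (ψ ∘ u) (n := m - 1)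
    (by omega)
  refine ⟨t, hcard, LinearIndependent.of_comp ψ ?_⟩
  exact (LinearIndependent.iff_fractionRing R F).mpr hli

namespace ArrPaper

open Matrix

variable {K : Type*} [Field K] {ℓ m : ℕ}

theorem eval_lin (y c : Fin ℓ → K) : eval y (lin c) = c ⬝ᵥ y := by
  simp [lin, dotProduct]

theorem lin_injective : Function.Injective (lin : (Fin ℓ → K) → S K ℓ) := fun c d h =>
  funext fun t => by simpa [eval_lin] using congrArg (eval (Pi.single t 1)) h

theorem lin_single (i : Fin ℓ) : lin (Pi.single i (1 : K)) = X i := by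
  simp [lin, Pi.single_apply]

theorem mem_hyp_iff {β x : Fin ℓ → K} : x ∈ hyp β ↔ β ⬝ᵥ x = 0 := by
  simp [hyp, dotProduct]

variable (ι : (Fin m → K) →ₗ[K] (Fin ℓ → K))

theorem pullback_lin (α : Fin ℓ → K) :
    pullback ι (lin α) = lin (α ᵥ* LinearMap.toMatrix' ι) := by
  simp only [pullback, lin, map_sum, map_mul, aeval_C, aeval_X, algebraMap_eq, vecMul,
    dotProduct, LinearMap.toMatrix'_apply, Finset.mul_sum, Finset.sum_mul]
  rw [Finset.sum_comm]
  exact Finset.sum_congr rfl fun i _ => Finset.sum_congr rfl fun j _ => by ring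

theorem eval_pullback (y : Fin m → K) (p : S K ℓ) : eval y (pullback ι p) = eval (ι y) p := by
  change aeval y (pullback ι p) = aeval (ι y) p
  rw [← AlgHom.comp_apply, pullback, comp_aeval]
  congr 2
  funext j
  rw [← LinearMap.toMatrix'_mulVec]
  simp [mulVec, dotProduct, mul_comm]

theorem eval_pullback_lin (y : Fin m → K) (β : Fin ℓ → K) :
    eval y (pullback ι (lin β)) = β ⬝ᵥ ι y := by
  rw [eval_pullback, eval_lin]

theorem pullback_lin_ne_zero {β : Fin ℓ → K} (h : ¬ LinearMap.range ι ≤ hyp β) :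
    pullback ι (lin β) ≠ 0 := by
  refine fun h0 => h ?_
  rintro _ ⟨y, rfl⟩
  rw [mem_hyp_iff, ← eval_pullback_lin, h0, map_zero]

theorem vecMul_toMatrix'_eq_zero {α : Fin ℓ → K} (h : LinearMap.range ι ≤ hyp α) :
    α ᵥ* LinearMap.toMatrix' ι = 0 := by
  funext j
  simpa [vecMul, dotProduct] using mem_hyp_iff.mp (h ⟨Pi.single j 1, rfl⟩)

theorem vecMul_toMatrix'_of_coordLifts {γ : Fin m → (Fin ℓ → K)} (hγ : CoordLifts ι γ)
    (i : Fin m) : γ i ᵥ* LinearMap.toMatrix' ι = Pi.single i 1 :=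
  lin_injective (by rw [← pullback_lin, hγ i, lin_single])

theorem pullback_aeval_lin_of_coordLifts {γ : Fin m → (Fin ℓ → K)} (hγ : CoordLifts ι γ)
    (p : S K m) : pullback ι (aeval (fun j => lin (γ j)) p) = p := by
  rw [← AlgHom.comp_apply, comp_aeval]
  simp [hγ _]

noncomputable def liftD (w : Fin m → S K ℓ) : Deriv K ℓ :=
  fun i => ∑ j, C (ι (Pi.single j 1) i) * w j

theorem applyD_liftD (w : Fin m → S K ℓ) (α : Fin ℓ → K) :
    applyD (liftD ι w) α = ∑ j, C ((α ᵥ* LinearMap.toMatrix' ι) j) * w j := by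
  simp only [applyD, liftD, vecMul, dotProduct, LinearMap.toMatrix'_apply, map_sum, map_mul,
    Finset.mul_sum, Finset.sum_mul]
  rw [Finset.sum_comm]
  exact Finset.sum_congr rfl fun i _ => Finset.sum_congr rfl fun j _ => by ring

theorem restD_liftD {γ : Fin m → (Fin ℓ → K)} (hγ : CoordLifts ι γ) (w : Fin m → S K ℓ) :
    restD ι γ (liftD ι w) = fun i => pullback ι (w i) := by
  funext i
  simp [restD, applyD_liftD, vecMul_toMatrix'_of_coordLifts ι hγ, Pi.single_apply]

theorem liftD_mem_logDer {A : Finset (Fin ℓ → K)} {w : Fin m → S K ℓ}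
    (hw : ∀ α ∈ A, ¬ LinearMap.range ι ≤ hyp α → ∀ j, lin α ∣ w j) : liftD ι w ∈ logDer A := by
  intro α hα
  rw [applyD_liftD]
  by_cases h : LinearMap.range ι ≤ hyp α
  · simp [vecMul_toMatrix'_eq_zero ι h]
  · exact Finset.dvd_sum fun j _ => (hw α hα h j).mul_left _

theorem restD_add (γ : Fin m → (Fin ℓ → K)) (θ η : Deriv K ℓ) :
    restD ι γ (θ + η) = restD ι γ θ + restD ι γ η := by
  funext i; simp [restD, applyD_add]

theorem restD_smul (γ : Fin m → (Fin ℓ → K)) (f : S K ℓ) (θ : Deriv K ℓ) :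
    restD ι γ (f • θ) = pullback ι f • restD ι γ θ := by
  funext i; simp [restD, applyD_smul]

theorem restD_zero (γ : Fin m → (Fin ℓ → K)) : restD ι γ 0 = 0 := by
  funext i; simp [restD, applyD]

theorem restD_mem_span_image (γ : Fin m → (Fin ℓ → K)) {s : Set (Deriv K ℓ)} {θ : Deriv K ℓ}
    (hθ : θ ∈ Submodule.span (S K ℓ) s) :
    restD ι γ θ ∈ Submodule.span (S K m) (restD ι γ '' s) := by
  induction hθ using Submodule.span_induction with
  | mem θ hθ => exact Submodule.subset_span ⟨θ, hθ, rfl⟩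
  | zero => rw [restD_zero]; exact Submodule.zero_mem _
  | add θ η _ _ hθ hη => rw [restD_add]; exact Submodule.add_mem _ hθ hη
  | smul f θ _ hθ => rw [restD_smul]; exact Submodule.smul_mem _ _ hθ

theorem restD_eulerD {γ : Fin m → (Fin ℓ → K)} (hγ : CoordLifts ι γ) :
    restD ι γ (eulerD K ℓ) = eulerD K m :=
  funext hγ

noncomputable def prodFormsNotContaining (A : Finset (Fin ℓ → K))
    (Xs : Submodule K (Fin ℓ → K)) : S K ℓ :=
  ∏ β ∈ A.filter (fun β => ¬ Xs ≤ hyp β), lin β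

theorem eval_prodFormsNotContaining_ne_zero_iff {A : Finset (Fin ℓ → K)}
    {Xs : Submodule K (Fin ℓ → K)} {x : Fin ℓ → K} :
    eval x (prodFormsNotContaining A Xs) ≠ 0 ↔ ∀ β ∈ A, ¬ Xs ≤ hyp β → x ∉ hyp β := by
  simp [prodFormsNotContaining, Finset.prod_ne_zero_iff, eval_lin, mem_hyp_iff]

theorem pullback_prodFormsNotContaining_ne_zero {Xs : Submodule K (Fin ℓ → K)}
    (hι : LinearMap.range ι = Xs) (A : Finset (Fin ℓ → K)) :
    pullback ι (prodFormsNotContaining A Xs) ≠ 0 := by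
  subst hι
  rw [prodFormsNotContaining, map_prod, Finset.prod_ne_zero_iff]
  exact fun β hβ => pullback_lin_ne_zero ι (Finset.mem_filter.mp hβ).2

theorem exists_mem_logDer_restD_eq_smul {γ : Fin m → (Fin ℓ → K)} (hγ : CoordLifts ι γ)
    {Xs : Submodule K (Fin ℓ → K)} (hι : LinearMap.range ι = Xs) (A : Finset (Fin ℓ → K))
    (η : Deriv K m) :
    ∃ θ ∈ logDer A, restD ι γ θ = pullback ι (prodFormsNotContaining A Xs) • η := by
  subst hι
  refine ⟨liftD ι fun j => prodFormsNotContaining A (LinearMap.range ι) *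
    aeval (fun j => lin (γ j)) (η j), liftD_mem_logDer ι fun α hα h j => ?_, ?_⟩
  · exact (Finset.dvd_prod_of_mem _ (Finset.mem_filter.mpr ⟨hα, h⟩)).mul_right _
  · rw [restD_liftD ι hγ]
    funext i
    rw [map_mul, pullback_aeval_lin_of_coordLifts ι hγ, Pi.smul_apply, smul_eq_mul]

end ArrPaper

open ArrPaper in
theorem stmt10_general {K : Type*} [Field K] [Infinite K] {ℓ k : ℕ}
    (A : Finset (Fin ℓ → K))
    (Xs : Submodule K (Fin ℓ → K))
    (φ : (Fin (ℓ - k) → K) ≃ₗ[K] Xs)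
    (γ : Fin (ℓ - k) → (Fin ℓ → K))
    (hγ : CoordLifts (Xs.subtype ∘ₗ φ.toLinearMap) γ)
    (B : Finset (Fin (ℓ - k) → K)) :
    (∃ x, ∃ hx : x ∈ Xs, (∀ β ∈ A, ¬ Xs ≤ hyp β → x ∉ hyp β) ∧
      ∀ η ∈ logDer B, ∃ θ ∈ logDer A, ∃ f : S K (ℓ - k),
        MvPolynomial.eval (φ.symm ⟨x, hx⟩) f ≠ 0 ∧
        f • η = restD (Xs.subtype ∘ₗ φ.toLinearMap) γ θ) ∧
    (∀ (s : ℕ) (θ : Fin s → Deriv K ℓ),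
      Submodule.span (S K ℓ) ({eulerD K ℓ} ∪ Set.range θ) = logDer A →
      ∃ t : Finset (Fin s), t.card = ℓ - k - 1 ∧
        LinearIndependent (S K (ℓ - k))
          (fun i : t => restD (Xs.subtype ∘ₗ φ.toLinearMap) γ (θ i))) := by
  set ι := Xs.subtype ∘ₗ φ.toLinearMap
  have hι : LinearMap.range ι = Xs := by
    rw [LinearMap.range_comp, LinearEquiv.range, Submodule.map_top, Submodule.range_subtype]
  set Q := pullback ι (prodFormsNotContaining A Xs)
  have hQ : Q ≠ 0 := pullback_prodFormsNotContaining_ne_zero ι hι A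
  obtain ⟨y, hy⟩ : ∃ y, eval y Q ≠ 0 := by
    by_contra! h
    exact hQ (MvPolynomial.funext fun y => by simpa using h y)
  have hyX : ι y ∈ Xs := hι ▸ LinearMap.mem_range_self ι y
  have hsurj : ∀ η : Deriv K (ℓ - k), ∃ θ ∈ logDer A, restD ι γ θ = Q • η :=
    exists_mem_logDer_restD_eq_smul ι hγ hι A
  refine ⟨⟨ι y, hyX, ?_, fun η _ => ?_⟩, fun s θ hθ => ?_⟩
  · rwa [← eval_prodFormsNotContaining_ne_zero_iff, ← eval_pullback]
  · obtain ⟨θ, hθA, hθη⟩ := hsurj η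
    exact ⟨θ, hθA, Q, by rwa [show φ.symm ⟨ι y, hyX⟩ = y from φ.symm_apply_apply y], hθη.symm⟩
  · refine exists_finset_linearIndepOn_of_smul_single_mem_span (eulerD K _) (restD ι γ ∘ θ) hQ
      fun j => ?_
    obtain ⟨δ, hδA, hδ⟩ := hsurj (Pi.single j 1)
    rw [← hδ, ← restD_eulerD ι hγ, Set.range_comp, ← Set.image_insert_eq,
      ← Set.singleton_union]
    exact restD_mem_span_image ι γ (hθ ▸ hδA)

open ArrPaper in
/-- the Euler restriction map `ρ : D(𝒜) → D(𝒜^X)` is generically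
surjective; in particular any generating set of `D(𝒜)` yields `ℓ-k-1`
restrictions independent over `S^X`. -/
theorem stmt10 {K : Type*} [Field K] [Infinite K] {ℓ k : ℕ} (hk : k ≤ ℓ)
    (A : Finset (Fin ℓ → K)) (hA0 : ∀ α ∈ A, α ≠ 0)
    (Xs : Submodule K (Fin ℓ → K)) (hX : ∃ b ⊆ A, Xs = b.inf hyp)
    (hcodim : codim Xs = k)
    (φ : (Fin (ℓ - k) → K) ≃ₗ[K] Xs)
    (γ : Fin (ℓ - k) → (Fin ℓ → K))
    (hγ : CoordLifts (Xs.subtype ∘ₗ φ.toLinearMap) γ)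
    (B : Finset (Fin (ℓ - k) → K))
    (hB : Represents B (Xs.subtype ∘ₗ φ.toLinearMap) A Xs) :
    (∃ x, ∃ hx : x ∈ Xs, (∀ β ∈ A, ¬ Xs ≤ hyp β → x ∉ hyp β) ∧
      ∀ η ∈ logDer B, ∃ θ ∈ logDer A, ∃ f : S K (ℓ - k),
        MvPolynomial.eval (φ.symm ⟨x, hx⟩) f ≠ 0 ∧
        f • η = restD (Xs.subtype ∘ₗ φ.toLinearMap) γ θ) ∧
    (∀ (s : ℕ) (θ : Fin s → Deriv K ℓ),
      Submodule.span (S K ℓ) ({eulerD K ℓ} ∪ Set.range θ) = logDer A →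
      ∃ t : Finset (Fin s), t.card = ℓ - k - 1 ∧
        LinearIndependent (S K (ℓ - k))
          (fun i : t => restD (Xs.subtype ∘ₗ φ.toLinearMap) γ (θ i))) :=
  stmt10_general A Xs φ γ hγ B
end

section
/- Let 𝒜 be a central arrangement, H ∈ 𝒜, and X ∈ L_k(𝒜) with X ⊆ H, Y ∈ 𝒜^X. The modified restriction map ρ^H_{H,L}(θ) := ρ(θ) − (ρ(θ)(α_L)/α_L)·ρ(θ_E), defined for θ ∈ D_H(𝒜) and L ∈ 𝒜^H, sends D_H(𝒜) to D_L(𝒜^H), and composing such maps down to X yields a map ρ^X_{H,Y} : D_H(𝒜) → D_Y(𝒜^X) such that the Euler restriction ρ decomposes as ρ = ρ_E ⊕ ρ^X_{H,Y} : S·θ_E ⊕ D_H(𝒜) → S^X·ρ_E(θ_E) ⊕ D_Y(𝒜^X). -/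
open MvPolynomial Module

attribute [local instance] Classical.propDecidable

section Stmt16Aux

open ArrPaper

namespace Stmt16Aux

variable {K : Type*} [Field K] {ℓ m : ℕ}

/-- The linear functional attached to a form. -/
noncomputable def Lf (α : Fin ℓ → K) : (Fin ℓ → K) →ₗ[K] K :=
  ∑ i, α i • LinearMap.proj i

lemma Lf_apply (α x : Fin ℓ → K) : Lf α x = ∑ i, α i * x i := by
  simp [Lf]

lemma hyp_eq (α : Fin ℓ → K) : hyp α = LinearMap.ker (Lf α) := rfl

lemma Lf_single (α : Fin ℓ → K) (j : Fin ℓ) : Lf α (Pi.single j 1) = α j := by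
  simp [Lf_apply, Pi.single_apply]

lemma eval_lin (α x : Fin ℓ → K) : eval x (lin α) = ∑ i, α i * x i := by
  simp [lin]

lemma lin_injective : Function.Injective (lin : (Fin ℓ → K) → S K ℓ) := by
  intro a b h
  funext i
  have h2 := congrArg (eval (Pi.single i 1)) h
  simpa [eval_lin, Pi.single_apply] using h2

lemma lin_zero : lin (0 : Fin ℓ → K) = 0 := by simp [lin]

lemma lin_smul (c : K) (α : Fin ℓ → K) : lin (c • α) = C c * lin α := by
  simp [lin, Finset.mul_sum, C_mul, mul_assoc]

/-- `applyD θ` as a `K`-linear map in the form. -/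
noncomputable def applyFormL (θ : Deriv K ℓ) : (Fin ℓ → K) →ₗ[K] S K ℓ where
  toFun α := applyD θ α
  map_add' a b := by simp [applyD, add_mul, Finset.sum_add_distrib]
  map_smul' c a := by
    simp [applyD, smul_eq_C_mul, Finset.mul_sum, C_mul, mul_assoc]

lemma applyFormL_apply (θ : Deriv K ℓ) (α : Fin ℓ → K) :
    applyFormL θ α = applyD θ α := rfl

end Stmt16Aux

end Stmt16Aux
section Stmt16Aux2

open ArrPaper Stmt16Aux

namespace Stmt16Aux

variable {K : Type*} [Field K] {ℓ m : ℕ}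

/-- Pullback of a linear form along `ι`. -/
noncomputable def pullForm (ι : (Fin m → K) →ₗ[K] (Fin ℓ → K)) (α : Fin ℓ → K) :
    Fin m → K := fun i => ∑ j, α j * ι (Pi.single i 1) j

lemma pullForm_eq_Lf (ι : (Fin m → K) →ₗ[K] (Fin ℓ → K)) (α : Fin ℓ → K) (i : Fin m) :
    pullForm ι α i = Lf α (ι (Pi.single i 1)) := by
  simp [pullForm, Lf_apply]

lemma pi_single_sum (x : Fin m → K) : ∑ i, x i • (Pi.single i 1 : Fin m → K) = x := by
  funext j
  simp [Finset.sum_apply, Pi.single_apply]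

lemma Lf_pullForm (ι : (Fin m → K) →ₗ[K] (Fin ℓ → K)) (α : Fin ℓ → K) (x : Fin m → K) :
    Lf (pullForm ι α) x = Lf α (ι x) := by
  conv_rhs => rw [← pi_single_sum x]
  rw [map_sum, map_sum]
  simp only [map_smul, smul_eq_mul, Lf_apply, pullForm]
  refine Finset.sum_congr rfl fun i _ => ?_
  rw [Finset.sum_mul, Finset.mul_sum]
  exact Finset.sum_congr rfl fun j _ => by ring

lemma pullback_lin (ι : (Fin m → K) →ₗ[K] (Fin ℓ → K)) (α : Fin ℓ → K) :
    pullback ι (lin α) = lin (pullForm ι α) := by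
  simp only [lin, pullback, map_sum, map_mul, aeval_C, aeval_X, algebraMap_eq, pullForm,
    C_mul, Finset.sum_mul, Finset.mul_sum, mul_assoc]
  rw [Finset.sum_comm]

end Stmt16Aux

end Stmt16Aux2
section Stmt16Aux3

open ArrPaper Stmt16Aux

namespace Stmt16Aux

variable {K : Type*} [Field K] {ℓ m : ℕ}

/-- A derivation in `D(𝒜)` applied to a form vanishing on `X ∈ L(𝒜)` restricts
to `0` on `X`. -/
lemma pullback_applyD_eq_zero (A : Finset (Fin ℓ → K)) (b : Finset (Fin ℓ → K))
    (hbA : b ⊆ A) (Xs : Submodule K (Fin ℓ → K)) (hXs : Xs = b.inf hyp)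
    (ι : (Fin m → K) →ₗ[K] (Fin ℓ → K)) (hι : ∀ i, ι (Pi.single i 1) ∈ Xs)
    (θh : Deriv K ℓ) (hθh : θh ∈ logDer A)
    (δ : Fin ℓ → K) (hδ : Xs ≤ hyp δ) :
    pullback ι (applyD θh δ) = 0 := by
  -- each α ∈ b restricts to 0 and divides θh(α)
  have hzero : ∀ α ∈ b, pullback ι (applyD θh α) = 0 := by
    intro α hα
    obtain ⟨h, hh⟩ := hθh α (hbA hα)
    have hpf : pullForm ι α = 0 := by
      funext i
      have hmem : ι (Pi.single i 1) ∈ b.inf hyp := by rw [← hXs]; exact hι i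
      have : ι (Pi.single i 1) ∈ hyp α :=
        (Finset.inf_le hα : b.inf hyp ≤ hyp α) hmem
      rw [pullForm_eq_Lf]
      exact this
    rw [hh, map_mul, pullback_lin, hpf, lin_zero, zero_mul]
  -- δ is a K-combination of the forms in b
  have hker : ⨅ (a : b), LinearMap.ker (Lf (a : Fin ℓ → K)) ≤ LinearMap.ker (Lf δ) := by
    intro x hx
    rw [Submodule.mem_iInf] at hx
    apply hδ
    rw [hXs, Finset.inf_eq_iInf]
    rw [Submodule.mem_iInf]
    intro α
    rw [Submodule.mem_iInf]
    intro hα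
    exact hx ⟨α, hα⟩
  have hspan := mem_span_of_iInf_ker_le_ker hker
  obtain ⟨c, hc⟩ := (Submodule.mem_span_range_iff_exists_fun K).1 hspan
  have hδeq : δ = ∑ a : b, c a • (a : Fin ℓ → K) := by
    funext j
    have h2 := LinearMap.congr_fun hc (Pi.single j 1)
    simp only [LinearMap.coe_sum, Finset.sum_apply, LinearMap.smul_apply, smul_eq_mul,
      Lf_single] at h2
    rw [← h2]
    simp [Finset.sum_apply]
  rw [hδeq, ← applyFormL_apply, map_sum]
  rw [map_sum]
  refine Finset.sum_eq_zero fun a _ => ?_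
  rw [map_smul, map_smul, applyFormL_apply, hzero a a.2, smul_zero]

/-- Two forms with the same hyperplane are proportional. -/
lemma exists_smul_of_hyp_eq (p q : Fin m → K) (hp : p ≠ 0) (h : hyp q = hyp p) :
    ∃ c : K, c ≠ 0 ∧ p = c • q := by
  have hker : ⨅ (_ : Unit), LinearMap.ker (Lf q) ≤ LinearMap.ker (Lf p) := by
    rw [iInf_const, ← hyp_eq, ← hyp_eq, h]
  have hspan := mem_span_of_iInf_ker_le_ker hker
  rw [Set.range_const, Submodule.mem_span_singleton] at hspan
  obtain ⟨c, hc⟩ := hspan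
  have hpq : p = c • q := by
    funext j
    have h2 := LinearMap.congr_fun hc (Pi.single j 1)
    simp only [LinearMap.smul_apply, smul_eq_mul, Lf_single] at h2
    simpa using h2.symm
  refine ⟨c, fun hc0 => hp ?_, hpq⟩
  rw [hpq, hc0, zero_smul]

end Stmt16Aux

end Stmt16Aux3
section Stmt16Aux4

open ArrPaper Stmt16Aux

namespace Stmt16Aux

variable {K : Type*} [Field K] {ℓ m : ℕ}

lemma lin_single (i : Fin ℓ) : lin (Pi.single i (1 : K)) = X i := by
  simp [lin, Pi.single_apply, apply_ite (C : K → S K ℓ)]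

/-- `Lf` as a linear map in the form. -/
noncomputable def LfL : (Fin ℓ → K) →ₗ[K] ((Fin ℓ → K) →ₗ[K] K) where
  toFun := Lf
  map_add' a b := by
    ext x; simp [Lf_apply, add_mul, Finset.sum_add_distrib]
  map_smul' c a := by
    ext x; simp [Lf_apply, Finset.mul_sum, mul_assoc]

lemma LfL_apply (α : Fin ℓ → K) : LfL α = Lf α := rfl

lemma key (A : Finset (Fin ℓ → K)) (Xs : Submodule K (Fin ℓ → K))
    (hX : ∃ c ⊆ A, Xs = c.inf hyp)
    (φ : (Fin m → K) ≃ₗ[K] Xs) (γ : Fin m → (Fin ℓ → K))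
    (hγ : CoordLifts (Xs.subtype ∘ₗ φ.toLinearMap) γ)
    (B : Finset (Fin m → K))
    (hB : Represents B (Xs.subtype ∘ₗ φ.toLinearMap) A Xs)
    (θh : Deriv K ℓ) (hθh : θh ∈ logDer A) (b : Fin m → K) (hb : b ∈ B) :
    ∃ g : S K m,
      applyD (restD (Xs.subtype ∘ₗ φ.toLinearMap) γ θh) b = lin b * g := by
  set ι : (Fin m → K) →ₗ[K] (Fin ℓ → K) := Xs.subtype ∘ₗ φ.toLinearMap with hι_def
  have hιX : ∀ x, ι x ∈ Xs := fun x => (φ x).2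
  have hιinj : Function.Injective ι := by
    intro x y hxy
    exact φ.injective (Subtype.ext hxy)
  have hιsurj : ∀ v ∈ Xs, ∃ x, ι x = v := by
    intro v hv
    exact ⟨φ.symm ⟨v, hv⟩, by simp [hι_def]⟩
  -- the coordinate lifts pull back to the coordinates
  have hγ1 : ∀ i, pullForm ι (γ i) = Pi.single i 1 := by
    intro i
    apply lin_injective
    rw [← pullback_lin, hγ i, lin_single]
  -- find the hyperplane of A corresponding to b
  have hbmem : (hyp b).map ι ∈ restArr A Xs := by
    rw [← hB.2.1]
    exact Finset.mem_image_of_mem _ hb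
  rw [restArr, Finset.mem_image] at hbmem
  obtain ⟨α, hαmem, hαeq⟩ := hbmem
  rw [Finset.mem_filter] at hαmem
  obtain ⟨hαA, hαX⟩ := hαmem
  -- hyp (pullForm ι α) = hyp b
  have hhyp : hyp (pullForm ι α) = hyp b := by
    ext x
    have h1 : x ∈ hyp (pullForm ι α) ↔ ι x ∈ hyp α := by
      rw [hyp_eq, hyp_eq, LinearMap.mem_ker, LinearMap.mem_ker, Lf_pullForm]
    have h2 : x ∈ hyp b ↔ ι x ∈ (hyp b).map ι := by
      constructor
      · intro hx; exact Submodule.mem_map_of_mem hx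
      · rintro ⟨y, hy, hxy⟩; rwa [← hιinj hxy]
    rw [h1, h2, ← hαeq, Submodule.mem_inf]
    exact ⟨fun h => ⟨hιX x, h⟩, fun h => h.2⟩
  -- pullForm ι α ≠ 0
  have hpne : pullForm ι α ≠ 0 := by
    intro h0
    apply hαX
    intro v hv
    obtain ⟨x, hx⟩ := hιsurj v hv
    have : Lf (pullForm ι α) x = 0 := by rw [h0]; simp [Lf_apply]
    rw [Lf_pullForm, hx] at this
    rw [hyp_eq, LinearMap.mem_ker]
    exact this
  obtain ⟨c, hc0, hcb⟩ := exists_smul_of_hyp_eq (pullForm ι α) b hpne hhyp.symm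
  -- β := the combination of the lifts
  set β : Fin ℓ → K := ∑ i, b i • γ i with hβ_def
  have hLfβ : ∀ x, Lf β x = ∑ i, b i * Lf (γ i) x := by
    intro x
    rw [hβ_def, ← LfL_apply, map_sum]
    simp [LfL_apply]
  have hpfβ : pullForm ι β = b := by
    funext j
    rw [pullForm_eq_Lf, hLfβ]
    have : ∀ i, Lf (γ i) (ι (Pi.single j 1)) = (Pi.single i 1 : Fin m → K) j := by
      intro i
      rw [← pullForm_eq_Lf, hγ1]
    simp only [this]
    simp [Pi.single_apply]
  -- applyD (restD θh) b = pullback (applyD θh β)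
  have hres : applyD (restD ι γ θh) b = pullback ι (applyD θh β) := by
    have h1 : applyD θh β = ∑ i, b i • applyD θh (γ i) := by
      rw [hβ_def, show applyD θh (∑ i, b i • γ i) = applyFormL θh (∑ i, b i • γ i) from rfl,
        map_sum]
      simp [map_smul, applyFormL_apply]
    rw [h1, map_sum, applyD]
    unfold restD
    refine Finset.sum_congr rfl fun i _ => ?_
    rw [map_smul, smul_eq_C_mul]
  -- δ := α - c • β vanishes on Xs
  have hδX : Xs ≤ hyp (α - c • β) := by
    intro v hv
    obtain ⟨x, hx⟩ := hιsurj v hv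
    rw [hyp_eq, LinearMap.mem_ker, ← LfL_apply, map_sub, map_smul]
    have hα' : Lf α v = c * Lf b x := by
      rw [← hx, ← Lf_pullForm, hcb, ← LfL_apply, map_smul, LinearMap.smul_apply,
        LfL_apply, smul_eq_mul]
    have hβ' : Lf β v = Lf b x := by
      rw [← hx, ← Lf_pullForm, hpfβ]
    simp only [LinearMap.sub_apply, LinearMap.smul_apply, LfL_apply, smul_eq_mul]
    rw [hα', hβ']
    ring
  obtain ⟨bA, hbA, hXsb⟩ := hX
  have hvan := pullback_applyD_eq_zero A bA hbA Xs hXsb ι (fun i => hιX _) θh hθh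
    (α - c • β) hδX
  obtain ⟨h, hh⟩ := hθh α hαA
  -- cancel c
  have hsplit : applyD θh (α - c • β) = applyD θh α - c • applyD θh β := by
    rw [← applyFormL_apply, map_sub, map_smul, applyFormL_apply, applyFormL_apply]
  rw [hsplit, map_sub, map_smul, hh, map_mul, pullback_lin, hcb, lin_smul,
    sub_eq_zero] at hvan
  have hcancel : pullback ι (applyD θh β) = lin b * pullback ι h := by
    have hC : (C c : S K m) ≠ 0 := fun h0 => hc0 (MvPolynomial.C_eq_zero.1 h0)
    apply mul_left_cancel₀ hC
    rw [← smul_eq_C_mul, ← hvan]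
    ring
  exact ⟨pullback ι h, by rw [hres, hcancel]⟩

end Stmt16Aux

end Stmt16Aux4
section Stmt16Aux5

open ArrPaper Stmt16Aux

namespace Stmt16Aux

variable {K : Type*} [Field K] {ℓ m : ℕ}

lemma applyD_sub (θ η : Deriv K ℓ) (α : Fin ℓ → K) :
    applyD (θ - η) α = applyD θ α - applyD η α := by
  simp [applyD, mul_sub, Finset.sum_sub_distrib]

lemma applyD_euler (α : Fin ℓ → K) : applyD (eulerD K ℓ) α = lin α := rfl

end Stmt16Aux

end Stmt16Aux5


open ArrPaper Stmt16Aux in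
/-- the modified restriction map `ρ^X_{H,Y}` sends `D_H(𝒜)` into
`D_Y(𝒜^X)`, and the Euler restriction decomposes as
`ρ = ρ_E ⊕ ρ^X_{H,Y} : S·θ_E ⊕ D_H(𝒜) → S^X·ρ(θ_E) ⊕ D_Y(𝒜^X)`. -/
theorem stmt16 {K : Type*} [Field K] {ℓ k : ℕ} (hk : k ≤ ℓ)
    (A : Finset (Fin ℓ → K)) (hA0 : ∀ α ∈ A, α ≠ 0)
    (Xs : Submodule K (Fin ℓ → K)) (hX : ∃ b ⊆ A, Xs = b.inf hyp)
    (hcodim : codim Xs = k)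
    (φ : (Fin (ℓ - k) → K) ≃ₗ[K] Xs)
    (γ : Fin (ℓ - k) → (Fin ℓ → K))
    (hγ : CoordLifts (Xs.subtype ∘ₗ φ.toLinearMap) γ)
    (B : Finset (Fin (ℓ - k) → K))
    (hB : Represents B (Xs.subtype ∘ₗ φ.toLinearMap) A Xs)
    (αH : Fin ℓ → K) (hαH : αH ∈ A) (hXH : Xs ≤ hyp αH)
    (αY : Fin (ℓ - k) → K) (hαY : αY ∈ B) :
    restD (Xs.subtype ∘ₗ φ.toLinearMap) γ (eulerD K ℓ) = eulerD K (ℓ - k) ∧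
    ∀ θh ∈ logDer A, applyD θh αH = 0 →
      ∃ g : S K (ℓ - k),
        applyD (restD (Xs.subtype ∘ₗ φ.toLinearMap) γ θh) αY = lin αY * g ∧
        restD (Xs.subtype ∘ₗ φ.toLinearMap) γ θh - g • eulerD K (ℓ - k) ∈ logDer B ∧
        applyD (restD (Xs.subtype ∘ₗ φ.toLinearMap) γ θh - g • eulerD K (ℓ - k)) αY = 0 ∧
        ∀ f : S K ℓ,
          restD (Xs.subtype ∘ₗ φ.toLinearMap) γ (f • eulerD K ℓ + θh) =
            (pullback (Xs.subtype ∘ₗ φ.toLinearMap) f + g) • eulerD K (ℓ - k) +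
              (restD (Xs.subtype ∘ₗ φ.toLinearMap) γ θh - g • eulerD K (ℓ - k)) := by
  constructor
  · funext i
    show pullback (Xs.subtype ∘ₗ φ.toLinearMap) (applyD (eulerD K ℓ) (γ i)) = X i
    rw [applyD_euler, hγ i]
  · intro θh hθh _hH
    obtain ⟨g, hg⟩ := key A Xs hX φ γ hγ B hB θh hθh αY hαY
    refine ⟨g, hg, ?_, ?_, ?_⟩
    · intro β hβ
      obtain ⟨gβ, hgβ⟩ := key A Xs hX φ γ hγ B hB θh hθh β hβ
      rw [applyD_sub, hgβ, applyD_smul, applyD_euler]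
      exact ⟨gβ - g, by ring⟩
    · rw [applyD_sub, hg, applyD_smul, applyD_euler]
      ring
    · intro f
      funext i
      show pullback (Xs.subtype ∘ₗ φ.toLinearMap)
          (applyD (f • eulerD K ℓ + θh) (γ i)) = _
      rw [applyD_add, applyD_smul, applyD_euler, map_add, map_mul, hγ i]
      simp only [Pi.add_apply, Pi.sub_apply, Pi.smul_apply, smul_eq_mul]
      show pullback (Xs.subtype ∘ₗ φ.toLinearMap) f * X i +
          pullback (Xs.subtype ∘ₗ φ.toLinearMap) (applyD θh (γ i)) =
        (pullback (Xs.subtype ∘ₗ φ.toLinearMap) f + g) * X i +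
          (pullback (Xs.subtype ∘ₗ φ.toLinearMap) (applyD θh (γ i)) - g * X i)
      ring
end
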